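/- Let f be a transcendental entire function in the class Δ with 0 < ρ(f) ≤ λ(f) < ∞. Then there exist constants A ≥ 1 and L > 1 (so in particular AL > 1) and r₀ > 0 such that for every r ≥ r₀ there exists t with r^A ≤ t ≤ r^{AL} and m(t,f) > M(r,f)^{AL}. -/

import Mathlib

open Filter MeasureTheory

/-- The maximum modulus `M(r,f) = max_{|z|=r} |f z|`. -/
noncomputable def maxMod (f : ℂ → ℂ) (r : ℝ) : ℝ :=
  sSup ((fun z => ‖f z‖) '' Metric.sphere (0 : ℂ) r)

/-- The minimum modulus `m(r,f) = min_{|z|=r} |f z|`. -/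
noncomputable def minMod (f : ℂ → ℂ) (r : ℝ) : ℝ :=
  sInf ((fun z => ‖f z‖) '' Metric.sphere (0 : ℂ) r)

/-- The upper logarithmic density of a set `E ⊆ (1,∞)`:
`limsup_{R→∞} (1/log R) ∫_{E∩(1,R)} dt/t`. -/
noncomputable def upperLogDens (E : Set ℝ) : ℝ :=
  Filter.limsup (fun R : ℝ => (Real.log R)⁻¹ * ∫ t in E ∩ Set.Ioo 1 R, t⁻¹) Filter.atTop

/-- `f` is a transcendental entire function: entire and not a polynomial. -/
def TranscendentalEntire (f : ℂ → ℂ) : Prop :=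
  Differentiable ℂ f ∧ ¬ ∃ p : Polynomial ℂ, ∀ z, f z = p.eval z

/-- The order `λ(f) = limsup_{r→∞} log log M(r,f) / log r`, as an extended real. -/
noncomputable def eOrder (f : ℂ → ℂ) : EReal :=
  Filter.limsup
    (fun r : ℝ => ((Real.log (Real.log (maxMod f r)) / Real.log r : ℝ) : EReal))
    Filter.atTop

/-- The lower order `ρ(f) = liminf_{r→∞} log log M(r,f) / log r`, as an extended real. -/
noncomputable def eLowerOrder (f : ℂ → ℂ) : EReal :=
  Filter.liminf
    (fun r : ℝ => ((Real.log (Real.log (maxMod f r)) / Real.log r : ℝ) : EReal))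
    Filter.atTop


/-! Choose `σ < ρ(f)` and `μ > λ(f)`, so that `r^σ < log M(r) < r^μ` for large `r`, and `L > 1`
with `1 - 1/L > ε₁`. The interval `(a, a^L)` carries the proportion `1 - 1/L` of the logarithmic
measure of `(1, a^L)`, so for large `a` it is not contained in `E(f)`. With `a = r^A` this gives
`t ∈ (r^A, r^{AL})` with `log m(t) > ε₂ log M(t) > ε₂ t^σ ≥ ε₂ r^{Aσ}`, and choosing `Aσ > μ` makes
the right-hand side exceed `AL r^μ > AL log M(r)` for large `r`. -/

open Set Real

lemma integral_inv_Ioo {a b : ℝ} (ha : 0 < a) (hab : a ≤ b) :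
    ∫ t in Ioo a b, t⁻¹ = log b - log a := by
  rw [← integral_Ioc_eq_integral_Ioo, ← intervalIntegral.integral_of_le hab,
    integral_inv_of_pos ha (ha.trans_le hab), log_div (ha.trans_le hab).ne' ha.ne']

lemma integrableOn_inv_Ioo {a b : ℝ} (ha : 0 < a) : IntegrableOn (fun t : ℝ => t⁻¹) (Ioo a b) :=
  ((continuousOn_inv₀.mono fun _ ht => (ha.trans_le ht.1).ne').integrableOn_Icc).mono_set
    Ioo_subset_Icc_self

lemma inv_nonneg_ae_restrict {s : Set ℝ} (hs : s ⊆ Ioi 0) :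
    0 ≤ᵐ[volume.restrict s] fun t : ℝ => t⁻¹ := by
  refine Eventually.filter_mono (ae_mono (Measure.restrict_mono hs le_rfl)) ?_
  filter_upwards [ae_restrict_mem measurableSet_Ioi] with t ht
  exact inv_nonneg.2 (le_of_lt ht)

/-- `upperLogDens E` is the `limsup` of this ratio as `R → ∞`. -/
noncomputable def logDensRatio (E : Set ℝ) (R : ℝ) : ℝ :=
  (log R)⁻¹ * ∫ t in E ∩ Ioo 1 R, t⁻¹

lemma logDensRatio_le_one (E : Set ℝ) {R : ℝ} (hR : 1 < R) : logDensRatio E R ≤ 1 := by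
  have hint : ∫ t in E ∩ Ioo 1 R, t⁻¹ ≤ log R :=
    calc ∫ t in E ∩ Ioo 1 R, t⁻¹ ≤ ∫ t in Ioo 1 R, t⁻¹ :=
          setIntegral_mono_set (integrableOn_inv_Ioo one_pos)
            (inv_nonneg_ae_restrict fun _ ht => one_pos.trans ht.1) inter_subset_right.eventuallyLE
      _ = log R := by rw [integral_inv_Ioo one_pos hR.le, log_one, sub_zero]
  rw [logDensRatio, inv_mul_le_iff₀ (log_pos hR), mul_one]
  exact hint

lemma one_sub_inv_le_logDensRatio_rpow {E : Set ℝ} {a L : ℝ} (hL : 1 < L) (ha : 1 < a)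
    (h : Ioo a (a ^ L) ⊆ E) : 1 - L⁻¹ ≤ logDensRatio E (a ^ L) := by
  have hloga := log_pos ha
  have hlogR : log (a ^ L) = L * log a := log_rpow (by linarith) L
  have hint : (L - 1) * log a ≤ ∫ t in E ∩ Ioo 1 (a ^ L), t⁻¹ :=
    calc (L - 1) * log a = ∫ t in Ioo a (a ^ L), t⁻¹ := by
          rw [integral_inv_Ioo (by linarith) (self_le_rpow_of_one_le ha.le hL.le), hlogR]; ring
      _ ≤ ∫ t in E ∩ Ioo 1 (a ^ L), t⁻¹ :=
          setIntegral_mono_set ((integrableOn_inv_Ioo one_pos).mono_set inter_subset_right)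
            (inv_nonneg_ae_restrict fun _ ht => one_pos.trans ht.2.1)
            (subset_inter h (Ioo_subset_Ioo_left ha.le)).eventuallyLE
  calc 1 - L⁻¹ = (L * log a)⁻¹ * ((L - 1) * log a) := by field_simp
    _ ≤ logDensRatio E (a ^ L) := by rw [logDensRatio, hlogR]; gcongr

lemma eventually_not_Ioo_rpow_subset {E : Set ℝ} {L : ℝ} (hL : 1 < L)
    (hE : upperLogDens E < 1 - L⁻¹) : ∀ᶠ a in atTop, ¬ Ioo a (a ^ L) ⊆ E := by
  by_contra h
  have hfreq : ∃ᶠ R in atTop, 1 - L⁻¹ ≤ logDensRatio E R :=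
    (tendsto_rpow_atTop (by linarith)).frequently
      (((not_eventually.1 h).and_eventually (eventually_gt_atTop 1)).mono
        fun a ⟨ha, ha1⟩ => one_sub_inv_le_logDensRatio_rpow hL ha1 (not_not.1 ha))
  exact hE.not_ge <| le_limsup_of_frequently_le hfreq <| isBoundedUnder_of_eventually_le <|
    (eventually_gt_atTop 1).mono fun _ => logDensRatio_le_one E

section MaxMod

variable {f : ℂ → ℂ}

lemma minMod_nonneg (r : ℝ) : 0 ≤ minMod f r :=
  Real.sInf_nonneg <| forall_mem_image.2 fun _ _ => norm_nonneg _

lemma norm_le_maxMod (hf : Continuous f) (z : ℂ) : ‖f z‖ ≤ maxMod f ‖z‖ :=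
  le_csSup ((isCompact_sphere 0 ‖z‖).image (continuous_norm.comp hf)).bddAbove
    ⟨z, by simp, rfl⟩

lemma norm_le_maxMod_of_norm_le (hf : Differentiable ℂ f) {z : ℂ} {r : ℝ} (hz : ‖z‖ ≤ r) :
    ‖f z‖ ≤ maxMod f r := by
  rcases ((norm_nonneg z).trans hz).eq_or_lt with rfl | hr
  · simpa [norm_le_zero_iff.1 hz] using norm_le_maxMod hf.continuous 0
  refine Complex.norm_le_of_forall_mem_frontier_norm_le Metric.isBounded_ball hf.diffContOnCl
    (fun w hw => ?_) (by rwa [closure_ball 0 hr.ne', mem_closedBall_zero_iff])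
  rw [frontier_ball 0 hr.ne', mem_sphere_zero_iff_norm] at hw
  exact hw ▸ norm_le_maxMod hf.continuous w

/-- Liouville's theorem combined with the maximum modulus principle. -/
lemma tendsto_maxMod_atTop (hf : Differentiable ℂ f) (hc : ∀ c, f ≠ Function.const ℂ c) :
    Tendsto (maxMod f) atTop atTop := by
  refine tendsto_atTop.2 fun B => ?_
  by_contra h
  have hB : ∀ z, ‖f z‖ ≤ B := fun z => by
    obtain ⟨r, hMr, hr⟩ := ((not_eventually.1 h).and_eventually (eventually_ge_atTop ‖z‖)).exists
    exact (norm_le_maxMod_of_norm_le hf hr).trans (not_le.1 hMr).le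
  obtain ⟨c, hfc⟩ := hf.exists_const_forall_eq_of_bounded
    (isBounded_iff_forall_norm_le.2 ⟨B, forall_mem_range.2 hB⟩)
  exact hc c (funext hfc)

lemma eventually_log_maxMod_lt_rpow (hM : Tendsto (maxMod f) atTop atTop) {μ : ℝ}
    (hμ : eOrder f < μ) :
    ∀ᶠ r in atTop, log (maxMod f r) < r ^ μ := by
  filter_upwards [eventually_lt_of_limsup_lt hμ, (tendsto_log_atTop.comp hM).eventually_gt_atTop 0,
    eventually_gt_atTop 1] with r h hM0 hr
  rw [EReal.coe_lt_coe_iff, log_div_log] at h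
  exact (logb_lt_iff_lt_rpow hr hM0).1 h

lemma eventually_rpow_lt_log_maxMod (hM : Tendsto (maxMod f) atTop atTop) {σ : ℝ}
    (hσ : σ < eLowerOrder f) :
    ∀ᶠ r in atTop, r ^ σ < log (maxMod f r) := by
  filter_upwards [eventually_lt_of_lt_liminf hσ, (tendsto_log_atTop.comp hM).eventually_gt_atTop 0,
    eventually_gt_atTop 1] with r h hM0 hr
  rw [EReal.coe_lt_coe_iff, log_div_log] at h
  exact (lt_logb_iff_rpow_lt hr hM0).1 h

lemma rpow_maxMod_lt_minMod {r t p ε : ℝ} (hMr : 0 < maxMod f r)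
    (hMt : 0 ≤ ε * log (maxMod f t)) (hrt : p * log (maxMod f r) < ε * log (maxMod f t))
    (ht : ε * log (maxMod f t) < log (minMod f t)) : maxMod f r ^ p < minMod f t := by
  have hmt : 1 < minMod f t := (log_pos_iff (minMod_nonneg t)).1 (hMt.trans_lt ht)
  exact (rpow_lt_iff_lt_log hMr (by linarith)).2 (hrt.trans ht)

end MaxMod

lemma eventually_mul_rpow_le_mul_rpow (c : ℝ) {d μ ν : ℝ} (hd : 0 < d) (h : μ < ν) :
    ∀ᶠ r in atTop, c * r ^ μ ≤ d * r ^ ν := by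
  filter_upwards [(tendsto_rpow_atTop (sub_pos.2 h)).eventually_ge_atTop (c / d),
    eventually_gt_atTop 0] with r hr hr0
  calc c * r ^ μ = d * (c / d * r ^ μ) := by field_simp
    _ ≤ d * (r ^ (ν - μ) * r ^ μ) := by gcongr
    _ = d * r ^ ν := by rw [← rpow_add hr0, sub_add_cancel]

theorem stmt_7_general (f : ℂ → ℂ) (hf : TranscendentalEntire f)
    (hΔ : ∃ ε₁ ∈ Set.Ioo (0:ℝ) 1, ∃ ε₂ ∈ Set.Ioo (0:ℝ) 1,
      upperLogDens
        {r : ℝ | 1 < r ∧ Real.log (minMod f r) ≤ ε₂ * Real.log (maxMod f r)} ≤ ε₁)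
    (hρpos : 0 < eLowerOrder f) (hOrderFin : eOrder f < ⊤) :
    ∃ A ≥ (1:ℝ), ∃ L > (1:ℝ), ∃ r₀ > (0:ℝ), ∀ r ≥ r₀, ∃ t : ℝ,
      r ^ A ≤ t ∧ t ≤ r ^ (A * L) ∧ minMod f t > maxMod f r ^ (A * L) := by
  obtain ⟨ε₁, ⟨hε₁0, hε₁⟩, ε₂, ⟨hε₂, -⟩, hdens⟩ := hΔ
  obtain ⟨σ, hσ0, hσ⟩ := EReal.lt_iff_exists_real_btwn.1 hρpos
  obtain ⟨μ, hμ, -⟩ := EReal.lt_iff_exists_real_btwn.1 hOrderFin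
  have hM := tendsto_maxMod_atTop hf.1 fun c hc => hf.2 ⟨Polynomial.C c, by simp [hc]⟩
  replace hσ0 : 0 < σ := EReal.coe_pos.1 hσ0
  obtain ⟨L, hL, hLε⟩ : ∃ L > (1:ℝ), ε₁ < 1 - L⁻¹ := by
    refine ⟨2 / (1 - ε₁), ?_, ?_⟩
    · rw [gt_iff_lt, one_lt_div (by linarith)]; linarith
    · rw [inv_div]; linarith
  obtain ⟨A, hA, hAσ⟩ : ∃ A ≥ (1:ℝ), μ < A * σ := by
    refine ⟨1 + |μ| / σ, le_add_of_nonneg_right (by positivity), ?_⟩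
    rw [add_mul, div_mul_cancel₀ _ hσ0.ne']
    linarith [le_abs_self μ]
  have hpow := tendsto_rpow_atTop (zero_lt_one.trans_le hA)
  have hev : ∀ᶠ r in atTop, ∃ t : ℝ,
      r ^ A ≤ t ∧ t ≤ r ^ (A * L) ∧ minMod f t > maxMod f r ^ (A * L) := by
    filter_upwards [hpow.eventually (eventually_not_Ioo_rpow_subset hL (hdens.trans_lt hLε)),
      hpow.eventually (eventually_forall_ge_atTop.2 (eventually_rpow_lt_log_maxMod hM hσ)),
      eventually_log_maxMod_lt_rpow hM hμ, eventually_mul_rpow_le_mul_rpow (A * L) hε₂ hAσ,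
      hM.eventually_gt_atTop 0, eventually_gt_atTop 1] with r hgap hlow hup hgrowth hMr hr
    rw [← rpow_mul (by linarith)] at hgap
    obtain ⟨t, ⟨hrt, htr⟩, htE⟩ := not_subset.1 hgap
    have ht : 1 < t := (one_lt_rpow hr (by linarith)).trans hrt
    have hσt := hlow t hrt.le
    have hMt : 0 < log (maxMod f t) := (rpow_pos_of_pos (by linarith) σ).trans hσt
    refine ⟨t, hrt.le, htr.le, rpow_maxMod_lt_minMod hMr (by positivity) ?_
      (not_le.1 fun h => htE ⟨ht, h⟩)⟩
    calc A * L * log (maxMod f r) < A * L * r ^ μ := by gcongr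
      _ ≤ ε₂ * (r ^ A) ^ σ := by rwa [← rpow_mul (by linarith)]
      _ ≤ ε₂ * t ^ σ := by gcongr
      _ < ε₂ * log (maxMod f t) := by gcongr
  obtain ⟨r₀, hr₀, h⟩ := (atTop_basis' 1).eventually_iff.1 hev
  exact ⟨A, hA, L, hL, r₀, by linarith, fun r hr => h hr⟩

theorem stmt_7 (f : ℂ → ℂ) (hf : TranscendentalEntire f)
    (hΔ : ∃ ε₁ ∈ Set.Ioo (0:ℝ) 1, ∃ ε₂ ∈ Set.Ioo (0:ℝ) 1,
      upperLogDens
        {r : ℝ | 1 < r ∧ Real.log (minMod f r) ≤ ε₂ * Real.log (maxMod f r)} ≤ ε₁)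
    (hρpos : 0 < eLowerOrder f) (hOrders : eLowerOrder f ≤ eOrder f) (hOrderFin : eOrder f < ⊤) :
    ∃ A ≥ (1:ℝ), ∃ L > (1:ℝ), ∃ r₀ > (0:ℝ), ∀ r ≥ r₀, ∃ t : ℝ,
      r ^ A ≤ t ∧ t ≤ r ^ (A * L) ∧ minMod f t > maxMod f r ^ (A * L) :=
  stmt_7_general f hf hΔ hρpos hOrderFin
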